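/- For every λ > 0, the principal Calkin space ⟨(n^{−λ})_{n=1}^∞⟩ generated by the sequence (n^{−λ})_{n=1}^∞ is not stable. -/

import Mathlib

open scoped BigOperators

noncomputable section

/-- The space of complex null sequences `c₀`. -/
def c0 : Set (ℕ → ℂ) := {α | Filter.Tendsto α Filter.atTop (nhds 0)}

/-- `rearrSum α n` is the supremum of `∑_{i ∈ F} |α i|` over finite sets `F ⊆ ℕ` with
`|F| = n`; for a null sequence it equals `α*₁ + ⋯ + α*ₙ` where `α*` is the decreasing
rearrangement of `(|α_n|)`. -/
def rearrSum (α : ℕ → ℂ) (n : ℕ) : ℝ :=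
  sSup ((fun F : Finset ℕ => ∑ i ∈ F, ‖α i‖) '' {F | F.card = n})

/-- The decreasing rearrangement of a null sequence, 0-indexed:
`rearr α n = α*_{n+1}`. -/
def rearr (α : ℕ → ℂ) (n : ℕ) : ℝ := rearrSum α (n + 1) - rearrSum α n

/-- A Calkin space: a linear subspace of `c₀` containing every null sequence whose
decreasing rearrangement is dominated termwise by that of one of its members. -/
def IsCalkinSpace (I : Set (ℕ → ℂ)) : Prop :=
  I ⊆ c0 ∧ (0 : ℕ → ℂ) ∈ I ∧
  (∀ α ∈ I, ∀ β ∈ I, α + β ∈ I) ∧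
  (∀ (c : ℂ), ∀ α ∈ I, c • α ∈ I) ∧
  (∀ α ∈ I, ∀ β ∈ c0, (∀ n, rearr β n ≤ rearr α n) → β ∈ I)

/-- `tensorSum α β n` is the supremum of `∑_{(i,j) ∈ F} |α i| |β j|` over finite
`F ⊆ ℕ × ℕ` with `|F| = n`; it equals `(α⊗β)₁ + ⋯ + (α⊗β)ₙ`. -/
def tensorSum (α β : ℕ → ℂ) (n : ℕ) : ℝ :=
  sSup ((fun F : Finset (ℕ × ℕ) => ∑ p ∈ F, ‖α p.1‖ * ‖β p.2‖) '' {F | F.card = n})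

/-- The tensor sequence `α⊗β`: the decreasing rearrangement of the double sequence
`(|α_m β_n|)_{m,n}`, 0-indexed: `tensorSeq α β n = (α⊗β)_{n+1}`. -/
def tensorSeq (α β : ℕ → ℂ) (n : ℕ) : ℝ := tensorSum α β (n + 1) - tensorSum α β n

/-- Embedding of real sequences into complex sequences. -/
def toC (f : ℕ → ℝ) : ℕ → ℂ := fun n => (f n : ℂ)

/-- The tensor product `𝔦⊗𝔧` of two Calkin spaces: the smallest Calkin space
containing `α⊗β` for all `α ∈ 𝔦`, `β ∈ 𝔧`. -/
def calkinTensor (I J : Set (ℕ → ℂ)) : Set (ℕ → ℂ) :=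
  ⋂₀ {K | IsCalkinSpace K ∧ ∀ α ∈ I, ∀ β ∈ J, toC (tensorSeq α β) ∈ K}

/-- A Calkin space `𝔦` is stable if `𝔦⊗𝔦 = 𝔦`. -/
def IsStableCalkin (I : Set (ℕ → ℂ)) : Prop := IsCalkinSpace I ∧ calkinTensor I I = I

/-- The principal Calkin space `⟨α⟩` generated by `α`: the smallest Calkin space
containing `α`. -/
def principalCalkin (α : ℕ → ℂ) : Set (ℕ → ℂ) := ⋂₀ {K | IsCalkinSpace K ∧ α ∈ K}

/-- `Kw ω α n = #{m : ω^{n+1} < α m ≤ ω^n}` (the sequence `α` being 0-indexed). -/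
def Kw (ω : ℝ) (α : ℕ → ℝ) (n : ℕ) : ℕ :=
  Set.ncard {m : ℕ | ω ^ (n + 1) < α m ∧ α m ≤ ω ^ n}

/-- `K̃ₙ = Σ_{i=0}^n Kᵢ`. -/
def Ktil (ω : ℝ) (α : ℕ → ℝ) (n : ℕ) : ℕ := ∑ i ∈ Finset.range (n + 1), Kw ω α i

/-- `Mₙ = Σ_{i+j=n} Kᵢ Kⱼ`. -/
def Mw (ω : ℝ) (α : ℕ → ℝ) (n : ℕ) : ℕ :=
  ∑ i ∈ Finset.range (n + 1), Kw ω α i * Kw ω α (n - i)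

/-- `M̃ₙ = Σ_{i=0}^n Mᵢ`. -/
def Mtil (ω : ℝ) (α : ℕ → ℝ) (n : ℕ) : ℕ := ∑ i ∈ Finset.range (n + 1), Mw ω α i


/-!
Write `a n = (n + 1) ^ (-λ)`. If `⟨a⟩` were stable, then `a ⊗ a ∈ ⟨a⟩`. For any weight `w` with
`w (n / 2) = O(w n)`, the sequences `β` with `β* = O(w)` form a Calkin space, since
`(β + δ)*ₙ ≤ β*_{n/2} + δ*_{n/2}`; taking `w = a` shows that every member of `⟨a⟩` has
`β* = O(a)`. But `a ⊗ a` is not `O(a)`: the double sequence has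
`N(M) = #{(i, j) : (i + 1)(j + 1) ≤ M} ≈ M log M` entries `≥ M ^ (-λ)`, so
`(a ⊗ a)*_{N(M)} ≥ M ^ (-λ)`, which is not `O(N(M) ^ (-λ))`.
-/

open Filter Asymptotics Finset Topology

section DecreasingRearrangement

variable {ι : Type*} {g : ι → ℝ}

def topSum (g : ι → ℝ) (n : ℕ) : ℝ :=
  sSup ((fun F : Finset ι => ∑ i ∈ F, g i) '' {F | F.card = n})

/-- The `n`-th largest value of `g`, counted from `0`; `rearr` and `tensorSeq` unfold to it. -/
def decRearr (g : ι → ℝ) (n : ℕ) : ℝ := topSum g (n + 1) - topSum g n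

def IsTopSet (g : ι → ℝ) (F : Finset ι) : Prop := ∀ i ∉ F, ∀ j ∈ F, g i ≤ g j

lemma IsTopSet.sum_le {F G : Finset ι} (hF : IsTopSet g F) (hG : G.card = F.card) :
    ∑ i ∈ G, g i ≤ ∑ i ∈ F, g i := by
  classical
  have hsdiff : ∑ i ∈ G \ F, g i ≤ ∑ i ∈ F \ G, g i := by
    rcases (F \ G).eq_empty_or_nonempty with hFG | hFG
    · have hGF : G \ F = ∅ := card_eq_zero.1 (by rw [card_sdiff_comm hG, hFG, card_empty])
      simp [hGF, hFG]
    · obtain ⟨j, hj, hmin⟩ := (F \ G).exists_min_image g hFG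
      calc ∑ i ∈ G \ F, g i ≤ (G \ F).card • g j :=
            sum_le_card_nsmul _ _ _ fun i hi => hF i (mem_sdiff.1 hi).2 j (mem_sdiff.1 hj).1
        _ = (F \ G).card • g j := by rw [card_sdiff_comm hG]
        _ ≤ ∑ i ∈ F \ G, g i := card_nsmul_le_sum _ _ _ hmin
  calc ∑ i ∈ G, g i = ∑ i ∈ G ∩ F, g i + ∑ i ∈ G \ F, g i := (sum_inter_add_sum_sdiff G F g).symm
    _ ≤ ∑ i ∈ F ∩ G, g i + ∑ i ∈ F \ G, g i := by rw [inter_comm]; exact add_le_add_right hsdiff _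
    _ = ∑ i ∈ F, g i := sum_inter_add_sum_sdiff F G g

lemma IsTopSet.topSum_card {F : Finset ι} (hF : IsTopSet g F) :
    topSum g F.card = ∑ i ∈ F, g i :=
  IsGreatest.csSup_eq ⟨⟨F, rfl, rfl⟩, by rintro _ ⟨G, hG, rfl⟩; exact hF.sum_le hG⟩

lemma IsTopSet.decRearr_eq {F : Finset ι} {j : ι} {n : ℕ} (hF : IsTopSet g F)
    (hcard : F.card = n + 1) (hj : j ∈ F) (hmin : ∀ k ∈ F, g j ≤ g k) : decRearr g n = g j := by
  classical
  have herase : IsTopSet g (F.erase j) := fun i hi k hk => by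
    by_cases hij : i = j
    · exact hij ▸ hmin k (mem_of_mem_erase hk)
    · exact hF i (fun hiF => hi (mem_erase.2 ⟨hij, hiF⟩)) k (mem_of_mem_erase hk)
  have hcard' : (F.erase j).card = n := by rw [card_erase_of_mem hj, hcard]; rfl
  rw [decRearr, ← hcard, ← hcard', hF.topSum_card, herase.topSum_card, ← add_sum_erase F g hj,
    add_sub_cancel_right]

lemma decRearr_of_antitone {f : ℕ → ℝ} (hf : Antitone f) : decRearr f = f := by
  funext n
  have hF : IsTopSet f (range (n + 1)) := fun i hi j hj => by
    rw [mem_range] at hi hj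
    exact hf (by omega)
  exact hF.decRearr_eq (card_range _) (self_mem_range_succ n)
    fun k hk => hf (by rw [mem_range] at hk; omega)

variable [Infinite ι]

lemma exists_notMem_forall_notMem_le (hg0 : 0 ≤ g)
    (hg : Tendsto g cofinite (𝓝 0)) (F : Finset ι) : ∃ j ∉ F, ∀ i ∉ F, g i ≤ g j := by
  classical
  by_cases hpos : ∃ i₀ ∉ F, 0 < g i₀
  · obtain ⟨i₀, hi₀F, hi₀⟩ := hpos
    have hfin : {i | g i₀ ≤ g i}.Finite := by
      simpa only [not_lt] using eventually_cofinite.1 (hg.eventually (gt_mem_nhds hi₀))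
    obtain ⟨j, hj, hmax⟩ := (hfin.toFinset \ F).exists_max_image g ⟨i₀, by simp [hi₀F]⟩
    refine ⟨j, (mem_sdiff.1 hj).2, fun i hi => ?_⟩
    by_cases hle : g i₀ ≤ g i
    · exact hmax i (by simp [hle, hi])
    · exact (le_of_not_ge hle).trans (hmax i₀ (by simp [hi₀F]))
  · push Not at hpos
    obtain ⟨j, hj⟩ := Infinite.exists_notMem_finset F
    exact ⟨j, hj, fun i hi => (hpos i hi).trans (hg0 j)⟩

lemma exists_isTopSet_card_eq (hg0 : 0 ≤ g) (hg : Tendsto g cofinite (𝓝 0))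
    (n : ℕ) : ∃ F : Finset ι, F.card = n ∧ IsTopSet g F := by
  classical
  induction n with
  | zero => exact ⟨∅, rfl, fun _ _ _ hj => absurd hj (notMem_empty _)⟩
  | succ n ih =>
    obtain ⟨F, hcard, hF⟩ := ih
    obtain ⟨j, hjF, hj⟩ := exists_notMem_forall_notMem_le hg0 hg F
    refine ⟨insert j F, by rw [card_insert_of_notMem hjF, hcard], fun i hi k hk => ?_⟩
    rw [mem_insert, not_or] at hi
    rcases mem_insert.1 hk with rfl | hkF
    · exact hj i hi.2
    · exact hF i hi.2 k hkF

lemma exists_isTopSet_decRearr_eq (hg0 : 0 ≤ g) (hg : Tendsto g cofinite (𝓝 0))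
    (n : ℕ) : ∃ F : Finset ι, ∃ j ∈ F, F.card = n + 1 ∧ IsTopSet g F ∧
      (∀ k ∈ F, g j ≤ g k) ∧ decRearr g n = g j := by
  obtain ⟨F, hcard, hF⟩ := exists_isTopSet_card_eq hg0 hg (n + 1)
  obtain ⟨j, hj, hmin⟩ := F.exists_min_image g (card_pos.1 (by omega))
  exact ⟨F, j, hj, hcard, hF, hmin, hF.decRearr_eq hcard hj hmin⟩

lemma decRearr_nonneg (hg0 : 0 ≤ g) (hg : Tendsto g cofinite (𝓝 0)) (n : ℕ) :
    0 ≤ decRearr g n := by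
  obtain ⟨F, j, -, -, -, -, heq⟩ := exists_isTopSet_decRearr_eq hg0 hg n
  exact heq ▸ hg0 j

lemma exists_notMem_decRearr_le (hg0 : 0 ≤ g) (hg : Tendsto g cofinite (𝓝 0)) {n : ℕ}
    {G : Finset ι} (hG : G.card ≤ n) : ∃ i ∉ G, decRearr g n ≤ g i := by
  obtain ⟨F, j, -, hcard, -, hmin, heq⟩ := exists_isTopSet_decRearr_eq hg0 hg n
  obtain ⟨i, hiF, hiG⟩ := not_subset.1 fun h : F ⊆ G => by have := card_le_card h; omega
  exact ⟨i, hiG, heq ▸ hmin i hiF⟩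

lemma le_decRearr (hg0 : 0 ≤ g) (hg : Tendsto g cofinite (𝓝 0)) {n : ℕ} {S : Finset ι}
    (hS : n < S.card) {c : ℝ} (hc : ∀ i ∈ S, c ≤ g i) : c ≤ decRearr g n := by
  obtain ⟨F, j, hj, hcard, hF, -, heq⟩ := exists_isTopSet_decRearr_eq hg0 hg n
  rw [heq]
  by_cases hSF : S ⊆ F
  · rw [eq_of_subset_of_card_le hSF (by omega)] at hc
    exact hc j hj
  · obtain ⟨s, hsS, hsF⟩ := not_subset.1 hSF
    exact (hc s hsS).trans (hF s hsF j hj)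

lemma exists_card_eq_forall_notMem_le_decRearr (hg0 : 0 ≤ g) (hg : Tendsto g cofinite (𝓝 0))
    (n : ℕ) : ∃ G : Finset ι, G.card = n ∧ ∀ i ∉ G, g i ≤ decRearr g n := by
  classical
  obtain ⟨F, j, hj, hcard, hF, -, heq⟩ := exists_isTopSet_decRearr_eq hg0 hg n
  refine ⟨F.erase j, by rw [card_erase_of_mem hj, hcard]; rfl, fun i hi => heq ▸ ?_⟩
  by_cases hij : i = j
  · exact hij ▸ le_rfl
  · exact hF i (fun hiF => hi (mem_erase.2 ⟨hij, hiF⟩)) j hj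

lemma decRearr_add_le {g₁ g₂ : ι → ℝ} (hg0 : 0 ≤ g) (hg : Tendsto g cofinite (𝓝 0))
    (hg₁0 : 0 ≤ g₁) (hg₁ : Tendsto g₁ cofinite (𝓝 0))
    (hg₂0 : 0 ≤ g₂) (hg₂ : Tendsto g₂ cofinite (𝓝 0)) (hle : g ≤ g₁ + g₂) (p q : ℕ) :
    decRearr g (p + q) ≤ decRearr g₁ p + decRearr g₂ q := by
  classical
  obtain ⟨G₁, hG₁, hle₁⟩ := exists_card_eq_forall_notMem_le_decRearr hg₁0 hg₁ p
  obtain ⟨G₂, hG₂, hle₂⟩ := exists_card_eq_forall_notMem_le_decRearr hg₂0 hg₂ q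
  obtain ⟨i, hi, hgi⟩ :=
    exists_notMem_decRearr_le hg0 hg ((card_union_le G₁ G₂).trans (by rw [hG₁, hG₂]))
  rw [mem_union, not_or] at hi
  exact hgi.trans ((hle i).trans (add_le_add (hle₁ i hi.1) (hle₂ i hi.2)))

lemma decRearr_antitone (hg0 : 0 ≤ g) (hg : Tendsto g cofinite (𝓝 0)) :
    Antitone (decRearr g) := by
  refine antitone_nat_of_succ_le fun n => ?_
  obtain ⟨G, hG, hle⟩ := exists_card_eq_forall_notMem_le_decRearr hg0 hg n
  obtain ⟨i, hi, hgi⟩ := exists_notMem_decRearr_le hg0 hg (n := n + 1) (G := G) (by omega)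
  exact hgi.trans (hle i hi)

lemma decRearr_const_mul (hg0 : 0 ≤ g) (hg : Tendsto g cofinite (𝓝 0)) {c : ℝ} (hc : 0 ≤ c) :
    decRearr (fun i => c * g i) = fun n => c * decRearr g n := by
  have htopSum : ∀ m, topSum (fun i => c * g i) m = c * topSum g m := fun m => by
    obtain ⟨F, rfl, hF⟩ := exists_isTopSet_card_eq hg0 hg m
    have hcF : IsTopSet (fun i => c * g i) F := fun i hi j hj =>
      mul_le_mul_of_nonneg_left (hF i hi j hj) hc
    rw [hF.topSum_card, hcF.topSum_card, mul_sum]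
  funext n
  rw [decRearr, decRearr, htopSum, htopSum, mul_sub]

end DecreasingRearrangement

section NullSequences

variable {α β δ : ℕ → ℂ}

lemma tendsto_norm_cofinite_of_mem_c0 (hβ : β ∈ c0) : Tendsto (‖β ·‖) cofinite (𝓝 0) := by
  rw [Nat.cofinite_eq_atTop]
  simpa using hβ.norm

lemma tendsto_norm_mul_norm_cofinite (hα : α ∈ c0) (hβ : β ∈ c0) :
    Tendsto (fun p : ℕ × ℕ => ‖α p.1‖ * ‖β p.2‖) cofinite (𝓝 0) := by
  obtain ⟨A, hA⟩ := hα.norm.bddAbove_range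
  obtain ⟨B, hB⟩ := hβ.norm.bddAbove_range
  rw [← coprod_cofinite, Filter.coprod, tendsto_sup]
  constructor
  · refine ((tendsto_norm_cofinite_of_mem_c0 hα).comp tendsto_comap).zero_mul_isBoundedUnder_le
      (isBoundedUnder_of ⟨B, fun p => ?_⟩)
    simpa using hB ⟨p.2, rfl⟩
  · refine isBoundedUnder_le_mul_tendsto_zero (isBoundedUnder_of ⟨A, fun p => ?_⟩)
      ((tendsto_norm_cofinite_of_mem_c0 hβ).comp tendsto_comap)
    simpa using hA ⟨p.1, rfl⟩

lemma add_mem_c0 (hβ : β ∈ c0) (hδ : δ ∈ c0) : β + δ ∈ c0 := by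
  have h := hβ.add hδ
  rwa [add_zero] at h

lemma smul_mem_c0 (c : ℂ) (hβ : β ∈ c0) : c • β ∈ c0 := by
  have h := hβ.const_smul c
  rwa [smul_zero] at h

lemma rearr_nonneg (hβ : β ∈ c0) (n : ℕ) : 0 ≤ rearr β n :=
  decRearr_nonneg (fun _ => norm_nonneg _) (tendsto_norm_cofinite_of_mem_c0 hβ) n

lemma rearr_antitone (hβ : β ∈ c0) : Antitone (rearr β) :=
  decRearr_antitone (fun _ => norm_nonneg _) (tendsto_norm_cofinite_of_mem_c0 hβ)

lemma rearr_add_le (hβ : β ∈ c0) (hδ : δ ∈ c0) (n : ℕ) :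
    rearr (β + δ) n ≤ rearr β (n / 2) + rearr δ (n / 2) := by
  have hβδ := add_mem_c0 hβ hδ
  calc rearr (β + δ) n ≤ rearr (β + δ) (n / 2 + n / 2) := rearr_antitone hβδ (by omega)
    _ ≤ rearr β (n / 2) + rearr δ (n / 2) :=
      decRearr_add_le (fun _ => norm_nonneg _) (tendsto_norm_cofinite_of_mem_c0 hβδ)
        (fun _ => norm_nonneg _) (tendsto_norm_cofinite_of_mem_c0 hβ)
        (fun _ => norm_nonneg _) (tendsto_norm_cofinite_of_mem_c0 hδ)
        (fun i => norm_add_le (β i) (δ i)) _ _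

lemma rearr_smul (c : ℂ) (hβ : β ∈ c0) : rearr (c • β) = fun n => ‖c‖ * rearr β n := by
  have hnorm : (fun i => ‖(c • β) i‖) = fun i => ‖c‖ * ‖β i‖ := by
    simp only [Pi.smul_apply, norm_smul]
  exact (congrArg decRearr hnorm).trans
    (decRearr_const_mul (fun _ => norm_nonneg _) (tendsto_norm_cofinite_of_mem_c0 hβ)
      (norm_nonneg c))

lemma rearr_zero : rearr 0 = 0 := by
  change decRearr (fun i => ‖(0 : ℕ → ℂ) i‖) = 0
  simp only [Pi.zero_apply, norm_zero]
  exact decRearr_of_antitone antitone_const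

lemma toC_mem_c0 {f : ℕ → ℝ} (hf : Tendsto f atTop (𝓝 0)) : toC f ∈ c0 :=
  (Complex.continuous_ofReal.tendsto 0).comp hf

lemma norm_toC_of_nonneg {f : ℕ → ℝ} {n : ℕ} (hf : 0 ≤ f n) : ‖toC f n‖ = f n := by
  simp [toC, abs_of_nonneg hf]

lemma rearr_toC_of_antitone {f : ℕ → ℝ} (hf0 : 0 ≤ f) (hf : Antitone f) : rearr (toC f) = f := by
  have hnorm : (fun i => ‖toC f i‖) = f := funext fun i => norm_toC_of_nonneg (hf0 i)
  exact (congrArg decRearr hnorm).trans (decRearr_of_antitone hf)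

lemma tensorSeq_nonneg (hα : α ∈ c0) (hβ : β ∈ c0) : 0 ≤ tensorSeq α β :=
  decRearr_nonneg (fun _ => by positivity) (tendsto_norm_mul_norm_cofinite hα hβ)

lemma tensorSeq_antitone (hα : α ∈ c0) (hβ : β ∈ c0) : Antitone (tensorSeq α β) :=
  decRearr_antitone (fun _ => by positivity) (tendsto_norm_mul_norm_cofinite hα hβ)

end NullSequences

lemma mem_principalCalkin_self (α : ℕ → ℂ) : α ∈ principalCalkin α := fun _ hK => hK.2

lemma principalCalkin_subset {α : ℕ → ℂ} {K : Set (ℕ → ℂ)} (hK : IsCalkinSpace K) (hα : α ∈ K) :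
    principalCalkin α ⊆ K :=
  Set.sInter_subset_of_mem ⟨hK, hα⟩

lemma toC_tensorSeq_mem_calkinTensor {I J : Set (ℕ → ℂ)} {α β : ℕ → ℂ} (hα : α ∈ I) (hβ : β ∈ J) :
    toC (tensorSeq α β) ∈ calkinTensor I J :=
  fun _ hK => hK.2 α hα β hβ

theorem isCalkinSpace_setOf_rearr_isBigO {w : ℕ → ℝ} (hw : (fun n => w (n / 2)) =O[atTop] w) :
    IsCalkinSpace {β | β ∈ c0 ∧ rearr β =O[atTop] w} := by
  refine ⟨fun β hβ => hβ.1, ⟨tendsto_const_nhds, by rw [rearr_zero]; exact isBigO_zero _ _⟩,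
    ?_, ?_, ?_⟩
  · rintro β ⟨hβ, hβw⟩ δ ⟨hδ, hδw⟩
    refine ⟨add_mem_c0 hβ hδ, ?_⟩
    have hhalf := (hβw.add hδw).comp_tendsto (Nat.tendsto_div_const_atTop two_ne_zero)
    refine (isBigO_of_le _ fun n => ?_).trans (hhalf.trans hw)
    rw [Real.norm_of_nonneg (rearr_nonneg (add_mem_c0 hβ hδ) n)]
    exact (rearr_add_le hβ hδ n).trans (Real.le_norm_self _)
  · rintro c β ⟨hβ, hβw⟩
    refine ⟨smul_mem_c0 c hβ, ?_⟩
    rw [rearr_smul c hβ]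
    exact hβw.const_mul_left _
  · rintro α ⟨-, hαw⟩ β hβ hle
    refine ⟨hβ, (isBigO_of_le _ fun n => ?_).trans hαw⟩
    rw [Real.norm_of_nonneg (rearr_nonneg hβ n),
      Real.norm_of_nonneg ((rearr_nonneg hβ n).trans (hle n))]
    exact hle n

def powSeq (lam : ℝ) (n : ℕ) : ℝ := ((n : ℝ) + 1) ^ (-lam)

lemma powSeq_pos (lam : ℝ) (n : ℕ) : 0 < powSeq lam n := by
  unfold powSeq
  positivity

section PowSeq

variable {lam : ℝ}

lemma powSeq_antitone (hlam : 0 ≤ lam) : Antitone (powSeq lam) := fun m n hmn =>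
  Real.rpow_le_rpow_of_nonpos (by positivity) (by gcongr) (by linarith)

lemma tendsto_powSeq (hlam : 0 < lam) : Tendsto (powSeq lam) atTop (𝓝 0) :=
  (tendsto_rpow_neg_atTop hlam).comp (tendsto_atTop_add_const_right _ 1 tendsto_natCast_atTop_atTop)

lemma powSeq_half_isBigO (hlam : 0 ≤ lam) : (fun n => powSeq lam (n / 2)) =O[atTop] powSeq lam := by
  refine isBigO_of_le' (c := 2 ^ lam) _ fun n => ?_
  rw [Real.norm_of_nonneg (powSeq_pos _ _).le, Real.norm_of_nonneg (powSeq_pos _ _).le]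
  have hhalf : ((n : ℝ) + 1) / 2 ≤ ((n / 2 : ℕ) : ℝ) + 1 := by
    have : (n : ℝ) ≤ 2 * ((n / 2 : ℕ) : ℝ) + 1 := by exact_mod_cast (by omega : n ≤ 2 * (n / 2) + 1)
    linarith
  calc powSeq lam (n / 2) ≤ (((n : ℝ) + 1) / 2) ^ (-lam) :=
        Real.rpow_le_rpow_of_nonpos (by positivity) hhalf (by linarith)
    _ = 2 ^ lam * powSeq lam n := by
        rw [Real.div_rpow (by positivity) zero_le_two, Real.rpow_neg zero_le_two, div_inv_eq_mul,
          mul_comm, powSeq]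

end PowSeq

/-- The lattice points under the hyperbola `(i + 1) (j + 1) = M`. -/
def hyperbolaSet (M : ℕ) : Finset (ℕ × ℕ) :=
  (range M).biUnion fun i => {i} ×ˢ range (M / (i + 1))

lemma card_hyperbolaSet (M : ℕ) : (hyperbolaSet M).card = ∑ i ∈ range M, M / (i + 1) := by
  rw [hyperbolaSet, card_biUnion fun i _ j _ hij =>
    disjoint_product.2 (Or.inl (disjoint_singleton.2 hij))]
  simp

lemma mul_le_of_mem_hyperbolaSet {M : ℕ} {p : ℕ × ℕ} (hp : p ∈ hyperbolaSet M) :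
    (p.1 + 1) * (p.2 + 1) ≤ M := by
  simp only [hyperbolaSet, mem_biUnion, mem_product, mem_singleton, mem_range] at hp
  obtain ⟨i, -, rfl, hj⟩ := hp
  rw [mul_comm]
  exact (Nat.le_div_iff_mul_le (Nat.succ_pos _)).1 hj

/-- With `H_K` the (unbounded) harmonic numbers, `#(hyperbolaSet M) ≥ M H_K - K` for `K ≤ M`. -/
lemma eventually_mul_le_card_hyperbolaSet (T : ℝ) :
    ∀ᶠ M : ℕ in atTop, T * M ≤ (hyperbolaSet M).card := by
  obtain ⟨K, hK⟩ :=
    (Real.tendsto_sum_range_one_div_nat_succ_atTop.eventually_ge_atTop (T + 1)).exists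
  filter_upwards [eventually_ge_atTop K] with M hKM
  have hfloor : ∀ i : ℕ, (M : ℝ) * (1 / ((i : ℝ) + 1)) - 1 ≤ ((M / (i + 1) : ℕ) : ℝ) := fun i => by
    have := Nat.lt_floor_add_one ((M : ℝ) / ((i + 1 : ℕ) : ℝ))
    rw [Nat.floor_div_eq_div] at this
    push_cast at this
    rw [mul_one_div]
    linarith
  have hKMr : (K : ℝ) ≤ M := by exact_mod_cast hKM
  calc T * M ≤ M * ∑ i ∈ range K, 1 / ((i : ℝ) + 1) - K := by nlinarith
    _ = ∑ i ∈ range K, ((M : ℝ) * (1 / ((i : ℝ) + 1)) - 1) := by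
        rw [sum_sub_distrib, mul_sum]; simp
    _ ≤ ∑ i ∈ range K, ((M / (i + 1) : ℕ) : ℝ) := sum_le_sum fun i _ => hfloor i
    _ ≤ ∑ i ∈ range M, ((M / (i + 1) : ℕ) : ℝ) :=
        sum_le_sum_of_subset_of_nonneg (range_subset_range.2 hKM) fun _ _ _ => by positivity
    _ = (hyperbolaSet M).card := by rw [card_hyperbolaSet]; push_cast; rfl

lemma rpow_le_tensorSeq_powSeq {lam : ℝ} (hlam : 0 < lam) {M n : ℕ}
    (hn : n < (hyperbolaSet M).card) :
    (M : ℝ) ^ (-lam) ≤ tensorSeq (toC (powSeq lam)) (toC (powSeq lam)) n := by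
  have ha := toC_mem_c0 (tendsto_powSeq hlam)
  refine le_decRearr (fun _ => by positivity) (tendsto_norm_mul_norm_cofinite ha ha) hn
    fun p hp => ?_
  have hnorm : ∀ k, ‖toC (powSeq lam) k‖ = ((k : ℝ) + 1) ^ (-lam) := fun k =>
    norm_toC_of_nonneg (powSeq_pos lam k).le
  have hpM : ((p.1 : ℝ) + 1) * ((p.2 : ℝ) + 1) ≤ M := by
    exact_mod_cast mul_le_of_mem_hyperbolaSet hp
  rw [hnorm, hnorm, ← Real.mul_rpow (by positivity) (by positivity)]
  exact Real.rpow_le_rpow_of_nonpos (by positivity) hpM (by linarith)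

theorem not_isBigO_tensorSeq_powSeq {lam : ℝ} (hlam : 0 < lam) :
    ¬ tensorSeq (toC (powSeq lam)) (toC (powSeq lam)) =O[atTop] powSeq lam := by
  intro hO
  have ha := toC_mem_c0 (tendsto_powSeq hlam)
  obtain ⟨C, hC, hCf⟩ := hO.exists_pos
  obtain ⟨n₀, hn₀⟩ := eventually_atTop.1 hCf.bound
  -- `T ^ λ = C + 1` makes `C (T M) ^ (-λ) < M ^ (-λ)`
  set T := (C + 1) ^ lam⁻¹
  have hT : T ^ lam = C + 1 := Real.rpow_inv_rpow (by linarith) hlam.ne'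
  have hT1 : 1 ≤ T := Real.one_le_rpow (by linarith) (inv_nonneg.2 hlam.le)
  obtain ⟨M, hTM, hM⟩ :=
    ((eventually_mul_le_card_hyperbolaSet T).and (eventually_ge_atTop (n₀ + 1))).exists
  set N := (hyperbolaSet M).card
  have hMpos : (0 : ℝ) < M := by exact_mod_cast (show 0 < M by omega)
  have hNM : M ≤ N := by exact_mod_cast (le_mul_of_one_le_left hMpos.le hT1).trans hTM
  have hN : (((N - 1 : ℕ) : ℝ) + 1) = N := by
    rw [← Nat.cast_add_one, Nat.sub_add_cancel (by omega)]
  have hup := hn₀ (N - 1) (by omega)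
  rw [Real.norm_of_nonneg (tensorSeq_nonneg ha ha _), Real.norm_of_nonneg (powSeq_pos _ _).le,
    powSeq, hN] at hup
  have hTMN : (N : ℝ) ^ (-lam) ≤ (C + 1)⁻¹ * (M : ℝ) ^ (-lam) := by
    calc (N : ℝ) ^ (-lam) ≤ (T * M) ^ (-lam) :=
          Real.rpow_le_rpow_of_nonpos (by positivity) hTM (by linarith)
      _ = (C + 1)⁻¹ * (M : ℝ) ^ (-lam) := by
          rw [Real.mul_rpow (by positivity) hMpos.le, Real.rpow_neg (by positivity), hT]
  have hMl : 0 < (M : ℝ) ^ (-lam) := Real.rpow_pos_of_pos hMpos _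
  have key := (rpow_le_tensorSeq_powSeq hlam (M := M) (n := N - 1) (by omega)).trans
    (hup.trans (mul_le_mul_of_nonneg_left hTMN hC.le))
  rw [← mul_assoc, ← div_eq_mul_inv] at key
  have : C / (C + 1) < 1 := (div_lt_one (by linarith)).2 (by linarith)
  nlinarith

/-- For every `λ > 0`, the principal Calkin space generated by the
sequence `(n^{-λ})_{n=1}^∞` is not stable. -/
theorem principal_pow_not_stable (lam : ℝ) (hlam : 0 < lam) :
    ¬ IsStableCalkin (principalCalkin (toC fun n => ((n : ℝ) + 1) ^ (-lam))) := by
  change ¬ IsStableCalkin (principalCalkin (toC (powSeq lam)))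
  rintro ⟨-, hstable⟩
  set a := toC (powSeq lam)
  have ha : a ∈ c0 := toC_mem_c0 (tendsto_powSeq hlam)
  have hrearr : rearr a = powSeq lam :=
    rearr_toC_of_antitone (fun n => (powSeq_pos lam n).le) (powSeq_antitone hlam.le)
  have hsub : principalCalkin a ⊆ {β | β ∈ c0 ∧ rearr β =O[atTop] powSeq lam} :=
    principalCalkin_subset (isCalkinSpace_setOf_rearr_isBigO (powSeq_half_isBigO hlam.le))
      ⟨ha, hrearr ▸ isBigO_refl _ _⟩
  have hγ : toC (tensorSeq a a) ∈ principalCalkin a :=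
    hstable ▸ toC_tensorSeq_mem_calkinTensor (mem_principalCalkin_self a)
      (mem_principalCalkin_self a)
  have hO := (hsub hγ).2
  rw [rearr_toC_of_antitone (tensorSeq_nonneg ha ha) (tensorSeq_antitone ha ha)] at hO
  exact not_isBigO_tensorSeq_powSeq hlam hO
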